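/- Robustness condition (Theorem 1): Let E be a real normed vector space, K ≥ 2 a natural number, ε, δ ≥ 0 and p, φ ∈ [0,1], and let M : E → Measure (Fin K → ℝ) be a mechanism of probability measures such that (i) for every x, for (M x)-almost every y and every i, 0 ≤ y i ≤ 1, and (ii) M satisfies (K*ε, K*(1-p)*Real.sqrt(1-φ)*δ)-DP with respect to the adjacency relation ‖x - x'‖ ≤ 1. Define the expected score g i x := ∫ y, y i ∂(M x). If for some input x and some label c : Fin K, g c x > exp(2*K*ε) * (max over i ≠ c of g i x) + (1 + exp(K*ε)) * K*(1-p)*Real.sqrt(1-φ)*δ, then for every α with ‖α‖ ≤ 1 and every i ≠ c, g c (x + α) > g i (x + α); i.e. the predicted label of M on x + α is still c for all attacks of size at most 1. -/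

import Mathlib

open MeasureTheory

/-- A mechanism `A : X → Measure Y` (each `A x` a probability measure) satisfies
`(ε, δ)`-differential privacy with respect to the adjacency relation `Adj`. -/
def DiffPrivate {X Y : Type*} [MeasurableSpace Y] (Adj : X → X → Prop)
    (A : X → Measure Y) (ε δ : ℝ) : Prop :=
  ∀ x x', Adj x x' → ∀ S : Set Y, MeasurableSet S →
    A x S ≤ ENNReal.ofReal (Real.exp ε) * A x' S + ENNReal.ofReal δ

/-!
For `[0, 1]`-valued `f`, the layer cake formula `∫ f dμ = ∫₀¹ μ {f > t} dt` turns the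
`(Kε, δ')`-DP inequality on sets into `g j x ≤ e^{Kε} g j x' + δ'` on expected scores of
adjacent inputs. Applying it from `x` to `x + α` for the label `c`, and from `x + α` back to `x` for `i`,
the margin hypothesis absorbs both factors `e^{Kε}` and both error terms `δ'`.
-/

namespace MeasureTheory

variable {Y : Type*} [MeasurableSpace Y]

theorem lintegral_ofReal_eq_setLIntegral_Ioc_measure_lt (μ : Measure Y) {f : Y → ℝ}
    (hf : Measurable f) (hf01 : ∀ᵐ y ∂μ, f y ∈ Set.Icc 0 1) :
    ∫⁻ y, ENNReal.ofReal (f y) ∂μ = ∫⁻ t in Set.Ioc 0 1, μ {y | t < f y} := by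
  rw [lintegral_eq_lintegral_meas_lt μ (hf01.mono fun _ h => h.1) hf.aemeasurable,
    ← Set.Ioc_union_Ioi_eq_Ioi zero_le_one,
    lintegral_union measurableSet_Ioi (Set.Ioc_disjoint_Ioi le_rfl)]
  have h_above : ∀ t ∈ Set.Ioi (1 : ℝ), μ {y | t < f y} = 0 := fun t ht =>
    measure_mono_null (fun y hy => not_le.mpr (ht.trans hy))
      (ae_iff.mp (hf01.mono fun _ h => h.2))
  rw [setLIntegral_congr_fun measurableSet_Ioi h_above]
  simp

theorem integral_le_mul_integral_add_of_measure_le {μ ν : Measure Y} [IsFiniteMeasure ν]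
    {e δ : ℝ} (he : 0 ≤ e) (hδ : 0 ≤ δ)
    (hμν : ∀ S, MeasurableSet S → μ S ≤ ENNReal.ofReal e * ν S + ENNReal.ofReal δ)
    {f : Y → ℝ} (hf : Measurable f) (hμ01 : ∀ᵐ y ∂μ, f y ∈ Set.Icc 0 1)
    (hν01 : ∀ᵐ y ∂ν, f y ∈ Set.Icc 0 1) :
    ∫ y, f y ∂μ ≤ e * ∫ y, f y ∂ν + δ := by
  have hν_nonneg : 0 ≤ᵐ[ν] f := hν01.mono fun _ h => h.1
  have hlintegral : ∫⁻ y, ENNReal.ofReal (f y) ∂μ ≤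
      ENNReal.ofReal (e * ∫ y, f y ∂ν + δ) := by
    rw [ENNReal.ofReal_add (mul_nonneg he (integral_nonneg_of_ae hν_nonneg)) hδ,
      ENNReal.ofReal_mul he, ofReal_integral_eq_lintegral_ofReal
        (Integrable.of_mem_Icc 0 1 hf.aemeasurable hν01) hν_nonneg,
      lintegral_ofReal_eq_setLIntegral_Ioc_measure_lt μ hf hμ01,
      lintegral_ofReal_eq_setLIntegral_Ioc_measure_lt ν hf hν01]
    calc ∫⁻ t in Set.Ioc 0 1, μ {y | t < f y}
        ≤ ∫⁻ t in Set.Ioc 0 1, (ENNReal.ofReal e * ν {y | t < f y} + ENNReal.ofReal δ) :=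
          lintegral_mono fun t => hμν _ (measurableSet_lt measurable_const hf)
      _ = ENNReal.ofReal e * (∫⁻ t in Set.Ioc 0 1, ν {y | t < f y}) + ENNReal.ofReal δ := by
          rw [lintegral_add_right _ measurable_const,
            lintegral_const_mul' _ _ ENNReal.ofReal_ne_top, setLIntegral_const]
          simp
  rw [integral_eq_lintegral_of_nonneg_ae (hμ01.mono fun _ h => h.1) hf.aestronglyMeasurable]
  exact ENNReal.toReal_le_of_le_ofReal
    (add_nonneg (mul_nonneg he (integral_nonneg_of_ae hν_nonneg)) hδ) hlintegral

end MeasureTheory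

theorem DiffPrivate.integral_le {X Y : Type*} [MeasurableSpace Y] {Adj : X → X → Prop}
    {A : X → Measure Y} [∀ x, IsFiniteMeasure (A x)] {ε δ : ℝ}
    (hA : DiffPrivate Adj A ε δ) (hδ : 0 ≤ δ) {f : Y → ℝ} (hf : Measurable f)
    (hf01 : ∀ x, ∀ᵐ y ∂(A x), f y ∈ Set.Icc 0 1) {x x' : X} (hxx' : Adj x x') :
    ∫ y, f y ∂(A x) ≤ Real.exp ε * ∫ y, f y ∂(A x') + δ :=
  integral_le_mul_integral_add_of_measure_le (Real.exp_pos ε).le hδ (hA x x' hxx') hf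
    (hf01 x) (hf01 x')

theorem robustness_condition
    {E : Type*} [NormedAddCommGroup E] [NormedSpace ℝ E]
    (K : ℕ) (hK : 2 ≤ K) (ε δ p φ : ℝ) (hδ : 0 ≤ δ) (hp1 : p ≤ 1)
    (M : E → Measure (Fin K → ℝ)) (hM : ∀ x, IsProbabilityMeasure (M x))
    (hbound : ∀ x, ∀ᵐ y ∂(M x), ∀ i, 0 ≤ y i ∧ y i ≤ 1)
    (hDP : DiffPrivate (fun x x' => ‖x - x'‖ ≤ 1) M (K * ε)
      (K * (1 - p) * Real.sqrt (1 - φ) * δ)) :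
    ∀ (x : E) (c : Fin K),
      (∫ y, y c ∂(M x)) >
          Real.exp (2 * K * ε) *
            ((Finset.univ.erase c).sup'
              (by
                obtain ⟨i, hi⟩ :=
                  Fintype.exists_ne_of_one_lt_card (by rw [Fintype.card_fin]; omega) c
                exact ⟨i, Finset.mem_erase.mpr ⟨hi, Finset.mem_univ i⟩⟩)
              fun i => ∫ y, y i ∂(M x))
            + (1 + Real.exp (K * ε)) * (K * (1 - p) * Real.sqrt (1 - φ) * δ) →
      ∀ α : E, ‖α‖ ≤ 1 → ∀ i : Fin K, i ≠ c →
        (∫ y, y c ∂(M (x + α))) > ∫ y, y i ∂(M (x + α)) := by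
  intro x c hmargin α hα i hic
  set e := Real.exp (K * ε)
  set δ' := (K : ℝ) * (1 - p) * Real.sqrt (1 - φ) * δ
  have he : 0 < e := Real.exp_pos _
  have hδ' : 0 ≤ δ' := by
    have : 0 ≤ 1 - p := sub_nonneg.mpr hp1
    positivity
  have hscore (j : Fin K) {u v : E} (huv : ‖u - v‖ ≤ 1) :
      ∫ y, y j ∂(M u) ≤ e * ∫ y, y j ∂(M v) + δ' :=
    hDP.integral_le hδ' (measurable_pi_apply j) (fun x => (hbound x).mono fun _ h => h j) huv
  have hc := hscore c (u := x) (v := x + α) (by simpa using hα)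
  have hi := hscore i (u := x + α) (v := x) (by simpa using hα)
  have hmax := Finset.le_sup' (fun j => ∫ y, y j ∂(M x))
    (Finset.mem_erase.mpr ⟨hic, Finset.mem_univ i⟩)
  rw [show Real.exp (2 * K * ε) = e * e by rw [← Real.exp_add]; ring_nf] at hmargin
  refine lt_of_mul_lt_mul_left ?_ he.le
  calc e * ∫ y, y i ∂(M (x + α))
      ≤ e * (e * ∫ y, y i ∂(M x) + δ') := by gcongr
    _ < ∫ y, y c ∂(M x) - δ' := by
      linarith [mul_le_mul_of_nonneg_left hmax (mul_self_nonneg e)]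
    _ ≤ e * ∫ y, y c ∂(M (x + α)) := by linarith
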